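/- arXiv:2106.07752 — 5 statements merged into one kernel-verified Lean document; each statement's English description precedes it below -/
import Mathlib

section
/- Let n ≥ 1 and let u ∈ ℝ^{n×n} with u_{ij} ≥ 0. Let π be any permutation of {1,…,n} attaining OPT(u). Then for every player i, the VCG payment of player i under π equals the VCG price of the item π(i): p_i(u,π) = OPT_{+π(i)}(u) − OPT(u). In particular, in every welfare-maximizing assignment each item j is sold for the same price C_j(u), independent of the receiving player and of the chosen optimal assignment. -/
open Finset

/-- The optimal welfare of the assignment problem. -/
noncomputable def OPT (n : ℕ) (u : Fin n → Fin n → ℝ) : ℝ :=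
  sSup {v | ∃ π : Equiv.Perm (Fin n), v = ∑ i, u i (π i)}

/-- The optimal welfare when a second copy of item `j` is available. -/
noncomputable def OPTplus (n : ℕ) (u : Fin n → Fin n → ℝ) (j : Fin n) : ℝ :=
  sSup {v | ∃ π : Fin n → Fin n,
    (∀ ℓ : Fin n, ℓ ≠ j → (Finset.univ.filter (fun i => π i = ℓ)).card ≤ 1) ∧
    (Finset.univ.filter (fun i => π i = j)).card ≤ 2 ∧
    v = ∑ i, u i (π i)}

/-- The VCG payment of player `i` under an optimal assignment `π`:
the optimal welfare of the other players when `i` is absent, minus their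
realized welfare under `π`. -/
noncomputable def payment (n : ℕ) (u : Fin n → Fin n → ℝ) (π : Equiv.Perm (Fin n))
    (i : Fin n) : ℝ :=
  sSup {v | ∃ σ : Fin n → Fin n,
      (∀ k l : Fin n, k ≠ i → l ≠ i → σ k = σ l → k = l) ∧
      v = ∑ k ∈ Finset.univ.erase i, u k (σ k)} -
    ∑ k ∈ Finset.univ.erase i, u k (π k)

/-!
Write `j = π i`. Handing `j` to player `i` on top of any assignment of the other players
shows `OPT₋ᵢ + u i j ≤ OPT₊ⱼ`. Conversely, let `τ` use `j` at most twice. Hall's theorem gives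
a permutation `ρ` with `ρ i = τ i` and `ρ k ∈ {τ k, π k}` for `k ≠ i`; giving every player the
other element `σ k` of the pair `{τ k, π k}` yields `σ` with the fibre sizes of `τ` and
`σ i = j`, hence injective away from `i`. Since `τ + π = ρ + σ` pointwise, the welfare of `τ`
is at most `OPT + OPT₋ᵢ + u i j` minus that of `π`, which is `OPT₋ᵢ + u i j` when `π` is optimal.
-/

section Assignment

variable {α β : Type*}

def IsAssignmentWithExtraCopy [Fintype α] [DecidableEq β] (j : β) (τ : α → β) : Prop :=
  (∀ ℓ, ℓ ≠ j → #{k | τ k = ℓ} ≤ 1) ∧ #{k | τ k = j} ≤ 2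

lemma card_filter_apply_eq_le_one_iff_injOn [DecidableEq β] {s : Finset α} {f : α → β} :
    (∀ b, #{k ∈ s | f k = b} ≤ 1) ↔ Set.InjOn f s :=
  ⟨fun h a ha a' ha' hf =>
    card_le_one.mp (h (f a)) a (by simpa using ha) a' (by simpa [hf] using ha'),
   fun h b => card_le_one.mpr fun a ha a' ha' => by
    simp only [mem_filter] at ha ha'
    exact h ha.1 ha'.1 (ha.2.trans ha'.2.symm)⟩

lemma card_filter_apply_eq_eq_ite_add [Fintype α] [DecidableEq α] [DecidableEq β]
    (f : α → β) (i : α) (b : β) :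
    #{k | f k = b} = (if f i = b then 1 else 0) + #{k ∈ univ.erase i | f k = b} := by
  rw [card_filter, card_filter, ← add_sum_erase _ _ (mem_univ i)]

lemma Equiv.card_filter_apply_eq [Fintype α] [DecidableEq β] (e : α ≃ β) (b : β) :
    #{k | e k = b} = 1 := by
  rw [card_eq_one]
  exact ⟨e.symm b, by ext; simp [e.eq_symm_apply]⟩

lemma isAssignmentWithExtraCopy_iff_injOn [Fintype α] [DecidableEq α] [DecidableEq β]
    {σ : α → β} {i : α} {j : β} (hσi : σ i = j) :
    IsAssignmentWithExtraCopy j σ ↔ Set.InjOn σ {i}ᶜ := by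
  have hcompl : ({i}ᶜ : Set α) = ↑(univ.erase i) := by ext; simp
  rw [hcompl, ← card_filter_apply_eq_le_one_iff_injOn]
  simp only [IsAssignmentWithExtraCopy, card_filter_apply_eq_eq_ite_add σ i, hσi, ↓reduceIte]
  constructor
  · rintro ⟨hne, hj⟩ ℓ
    rcases eq_or_ne ℓ j with rfl | hℓ
    · omega
    · simpa [Ne.symm hℓ] using hne ℓ hℓ
  · intro h
    exact ⟨fun ℓ hℓ => by simpa [Ne.symm hℓ] using h ℓ, by have := h j; omega⟩

lemma Set.InjOn.isAssignmentWithExtraCopy_update [Fintype α] [DecidableEq α] [DecidableEq β]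
    {σ : α → β} {i : α} (hσ : Set.InjOn σ {i}ᶜ) (j : β) :
    IsAssignmentWithExtraCopy j (Function.update σ i j) :=
  (isAssignmentWithExtraCopy_iff_injOn (Function.update_self i j σ)).mpr
    (hσ.congr fun _ hk => (Function.update_of_ne hk j σ).symm)

lemma sum_add_sum_eq_of_pairing [Fintype α] {M : Type*} [AddCommMonoid M] (u : α → β → M)
    {ρ σ τ π : α → β} (hpair : ∀ k, (ρ k = τ k ∧ σ k = π k) ∨ (ρ k = π k ∧ σ k = τ k)) :
    ∑ k, u k (τ k) + ∑ k, u k (π k) = ∑ k, u k (ρ k) + ∑ k, u k (σ k) := by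
  simp only [← sum_add_distrib]
  refine sum_congr rfl fun k _ => ?_
  rcases hpair k with ⟨hρ, hσ⟩ | ⟨hρ, hσ⟩ <;> rw [hρ, hσ]
  exact add_comm _ _

lemma card_filter_apply_eq_eq_of_pairing [Fintype α] [DecidableEq β] {ρ σ τ π : α → β}
    (hpair : ∀ k, (ρ k = τ k ∧ σ k = π k) ∨ (ρ k = π k ∧ σ k = τ k))
    (hρπ : ∀ b, #{k | ρ k = b} = #{k | π k = b}) (b : β) :
    #{k | σ k = b} = #{k | τ k = b} := by
  have h := sum_add_sum_eq_of_pairing (fun _ c => if c = b then 1 else 0) hpair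
  simp only [← card_filter] at h
  have := hρπ b
  omega

lemma exists_perm_apply_eq_or_eq [Fintype α] [DecidableEq α] (π : Equiv.Perm α) (i : α)
    {τ : α → α} (hτ : ∀ ℓ, ℓ ≠ π i → #{k | τ k = ℓ} ≤ 1) :
    ∃ ρ : Equiv.Perm α, ρ i = τ i ∧ ∀ k, k ≠ i → ρ k = τ k ∨ ρ k = π k := by
  let r : α → α → Prop := fun k ℓ => ℓ = τ k ∨ (k ≠ i ∧ ℓ = π k)
  have hall : ∀ s : Finset α, #s ≤ #{ℓ | ∃ k ∈ s, r k ℓ} := by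
    intro s
    have hτs : ∀ k ∈ s, τ k ∈ ({ℓ | ∃ k ∈ s, r k ℓ} : Finset α) :=
      fun k hk => mem_filter.mpr ⟨mem_univ _, k, hk, Or.inl rfl⟩
    have hπs : (s.erase i).image π ⊆ ({ℓ | ∃ k ∈ s, r k ℓ} : Finset α) := by
      intro ℓ hℓ
      obtain ⟨k, hk, rfl⟩ := mem_image.mp hℓ
      exact mem_filter.mpr ⟨mem_univ _, k, mem_of_mem_erase hk, Or.inr ⟨ne_of_mem_erase hk, rfl⟩⟩
    have hcard : #((s.erase i).image π) = #(s.erase i) := card_image_of_injective _ π.injective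
    by_cases his : i ∈ s
    · -- Only `π i` may be hit twice by `τ`, and it is missing from `π '' (s \ {i})`.
      obtain ⟨a, has, haP⟩ : ∃ a ∈ s, τ a ∉ (s.erase i).image π := by
        by_contra! h
        have hinj : Set.InjOn τ s := fun a ha a' ha' hτa =>
          have hne : τ a ≠ π i := fun hj => by
            obtain ⟨k, hk, hπk⟩ := mem_image.mp (h a ha)
            exact ne_of_mem_erase hk (π.injective (hπk.trans hj))
          card_le_one.mp (hτ _ hne) a (by simp) a' (by simp [hτa])
        have := card_le_card_of_injOn τ h hinj
        have := card_erase_add_one his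
        omega
      calc #s = #(insert (τ a) ((s.erase i).image π)) := by
            rw [card_insert_of_notMem haP, hcard, card_erase_add_one his]
        _ ≤ _ := card_le_card (insert_subset (hτs a has) hπs)
    · rw [erase_eq_of_notMem his] at hπs hcard
      exact hcard ▸ card_le_card hπs
  obtain ⟨ρ, hρ, hρr⟩ := (Fintype.all_card_le_filter_rel_iff_exists_injective r).mp hall
  refine ⟨Equiv.ofBijective ρ (Finite.injective_iff_bijective.mp hρ), ?_, fun k hk => ?_⟩
  · simpa [r] using hρr i
  · simpa [r, hk] using hρr k

theorem exists_perm_injOn_pairing [Fintype α] [DecidableEq α] (π : Equiv.Perm α) {i : α}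
    {τ : α → α} (hτ : IsAssignmentWithExtraCopy (π i) τ) :
    ∃ (ρ : Equiv.Perm α) (σ : α → α), σ i = π i ∧ Set.InjOn σ {i}ᶜ ∧
      ∀ k, (ρ k = τ k ∧ σ k = π k) ∨ (ρ k = π k ∧ σ k = τ k) := by
  obtain ⟨ρ, hρi, hρ⟩ := exists_perm_apply_eq_or_eq π i hτ.1
  let σ : α → α := fun k => if ρ k = τ k then π k else τ k
  have hpair : ∀ k, (ρ k = τ k ∧ σ k = π k) ∨ (ρ k = π k ∧ σ k = τ k) := by
    intro k
    by_cases hk : ρ k = τ k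
    · exact Or.inl ⟨hk, if_pos hk⟩
    · exact Or.inr ⟨(hρ k (by rintro rfl; exact hk hρi)).resolve_left hk, if_neg hk⟩
  have hσi : σ i = π i := if_pos hρi
  have hfiber := card_filter_apply_eq_eq_of_pairing hpair
    fun b => (ρ.card_filter_apply_eq b).trans (π.card_filter_apply_eq b).symm
  refine ⟨ρ, σ, hσi, (isAssignmentWithExtraCopy_iff_injOn hσi).mp ?_, hpair⟩
  exact ⟨fun ℓ hℓ => (hfiber ℓ).trans_le (hτ.1 ℓ hℓ), (hfiber _).trans_le hτ.2⟩

end Assignment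

section Welfare

variable {n : ℕ} (u : Fin n → Fin n → ℝ)

noncomputable def welfareWithout (i : Fin n) : ℝ :=
  sSup {v | ∃ σ : Fin n → Fin n,
      (∀ k l : Fin n, k ≠ i → l ≠ i → σ k = σ l → k = l) ∧
      v = ∑ k ∈ univ.erase i, u k (σ k)}

lemma payment_eq_welfareWithout_sub (π : Equiv.Perm (Fin n)) (i : Fin n) :
    payment n u π i = welfareWithout u i - ∑ k ∈ univ.erase i, u k (π k) :=
  rfl

lemma sum_le_OPT (ρ : Equiv.Perm (Fin n)) : ∑ k, u k (ρ k) ≤ OPT n u :=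
  le_csSup ((Set.finite_range fun ρ : Equiv.Perm (Fin n) => ∑ k, u k (ρ k)).subset
    (by rintro _ ⟨ρ, rfl⟩; exact ⟨ρ, rfl⟩)).bddAbove ⟨ρ, rfl⟩

lemma sum_le_OPTplus {j : Fin n} {τ : Fin n → Fin n} (hτ : IsAssignmentWithExtraCopy j τ) :
    ∑ k, u k (τ k) ≤ OPTplus n u j :=
  le_csSup ((Set.finite_range fun τ : Fin n → Fin n => ∑ k, u k (τ k)).subset
    (by rintro _ ⟨τ, -, -, rfl⟩; exact ⟨τ, rfl⟩)).bddAbove ⟨τ, hτ.1, hτ.2, rfl⟩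

lemma OPTplus_le {j : Fin n} {c : ℝ}
    (h : ∀ τ, IsAssignmentWithExtraCopy j τ → ∑ k, u k (τ k) ≤ c) : OPTplus n u j ≤ c := by
  have hid : IsAssignmentWithExtraCopy j (id : Fin n → Fin n) :=
    (isAssignmentWithExtraCopy_iff_injOn (i := j) rfl).mpr Function.injective_id.injOn
  refine csSup_le ⟨_, id, hid.1, hid.2, rfl⟩ ?_
  rintro _ ⟨τ, h₁, h₂, rfl⟩
  exact h τ ⟨h₁, h₂⟩

lemma sum_erase_le_welfareWithout {i : Fin n} {σ : Fin n → Fin n} (hσ : Set.InjOn σ {i}ᶜ) :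
    ∑ k ∈ univ.erase i, u k (σ k) ≤ welfareWithout u i :=
  le_csSup ((Set.finite_range fun σ : Fin n → Fin n => ∑ k ∈ univ.erase i, u k (σ k)).subset
    (by rintro _ ⟨σ, -, rfl⟩; exact ⟨σ, rfl⟩)).bddAbove ⟨σ, fun _ _ hk hl => @hσ _ hk _ hl, rfl⟩

lemma welfareWithout_le {i : Fin n} {c : ℝ}
    (h : ∀ σ, Set.InjOn σ {i}ᶜ → ∑ k ∈ univ.erase i, u k (σ k) ≤ c) :
    welfareWithout u i ≤ c := by
  refine csSup_le ⟨_, id, fun _ _ _ _ => id, rfl⟩ ?_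
  rintro _ ⟨σ, hσ, rfl⟩
  exact h σ fun _ hk _ hl => hσ _ _ hk hl

theorem OPTplus_le_OPT_add_payment (π : Equiv.Perm (Fin n)) (i : Fin n) :
    OPTplus n u (π i) ≤ OPT n u + payment n u π i := by
  refine OPTplus_le u fun τ hτ => ?_
  obtain ⟨ρ, σ, hσi, hσ, hpair⟩ := exists_perm_injOn_pairing π hτ
  have hsum := sum_add_sum_eq_of_pairing u hpair
  have hρ := sum_le_OPT u ρ
  have hσW := sum_erase_le_welfareWithout u hσ
  have hπsplit := add_sum_erase univ (fun k => u k (π k)) (mem_univ i)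
  have hσsplit := add_sum_erase univ (fun k => u k (σ k)) (mem_univ i)
  rw [hσi] at hσsplit
  rw [payment_eq_welfareWithout_sub]
  linarith

theorem payment_add_sum_le_OPTplus (π : Equiv.Perm (Fin n)) (i : Fin n) :
    payment n u π i + ∑ k, u k (π k) ≤ OPTplus n u (π i) := by
  have hW : welfareWithout u i ≤ OPTplus n u (π i) - u i (π i) := by
    refine welfareWithout_le u fun σ hσ => ?_
    have h := sum_le_OPTplus u (hσ.isAssignmentWithExtraCopy_update (π i))
    rw [← add_sum_erase _ _ (mem_univ i), Function.update_self,
      sum_congr rfl fun k hk => by rw [Function.update_of_ne (ne_of_mem_erase hk)]] at h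
    linarith
  rw [payment_eq_welfareWithout_sub, ← add_sum_erase _ _ (mem_univ i)]
  linarith

end Welfare

theorem vcg_payment_eq_item_price_general (n : ℕ)
    (u : Fin n → Fin n → ℝ)
    (π : Equiv.Perm (Fin n)) (hπ : ∑ i, u i (π i) = OPT n u) :
    ∀ i, payment n u π i = OPTplus n u (π i) - OPT n u := by
  intro i
  have hupper := OPTplus_le_OPT_add_payment u π i
  have hlower := payment_add_sum_le_OPTplus u π i
  rw [hπ] at hlower
  linarith

/-- In every welfare-maximizing assignment, the VCG payment of each player `i`
equals the VCG price `OPT_{+π(i)}(u) − OPT(u)` of the item `π i` she receives. -/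
theorem vcg_payment_eq_item_price (n : ℕ) (hn : 1 ≤ n)
    (u : Fin n → Fin n → ℝ) (hu : ∀ i j, 0 ≤ u i j)
    (π : Equiv.Perm (Fin n)) (hπ : ∑ i, u i (π i) = OPT n u) :
    ∀ i, payment n u π i = OPTplus n u (π i) - OPT n u :=
  vcg_payment_eq_item_price_general n u π hπ
end

section
/- Let n ≥ 1 and let u, ũ ∈ ℝ^{n×n} be two utility matrices with nonnegative entries. Then for every item j, the corresponding VCG prices satisfy |C_j(u) − C_j(ũ)| ≤ 2·Σ_i max_ℓ |u_{iℓ} − ũ_{iℓ}| (continuity of VCG prices in the utilities). -/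
/-!
Each of `OPT` and `OPTplus` is a maximum of total utilities `∑ i, u i (π i)` over a fixed
nonempty set of assignments `π`, and changing `u` to `ũ` changes every such total by at most
`∑ i, max_ℓ |u i ℓ - ũ i ℓ|`. Hence both optima move by at most that amount, and their
difference, the price, by at most twice that amount.
-/

open Finset

/-- The VCG price of item `j`. -/
noncomputable def price (n : ℕ) (u : Fin n → Fin n → ℝ) (j : Fin n) : ℝ :=
  OPTplus n u j - OPT n u

theorem csSup_le_csSup_add {S T : Set ℝ} {c : ℝ} (hS : S.Nonempty) (hT : BddAbove T)
    (h : ∀ x ∈ S, ∃ y ∈ T, x ≤ y + c) : sSup S ≤ sSup T + c :=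
  csSup_le hS fun x hx =>
    let ⟨_, hy, hxy⟩ := h x hx
    hxy.trans (add_le_add_left (le_csSup hT hy) c)

section Welfare

variable {n : ℕ} (u ut : Fin n → Fin n → ℝ)

theorem sum_iSup_abs_sub_comm :
    ∑ i, ⨆ ℓ, |ut i ℓ - u i ℓ| = ∑ i, ⨆ ℓ, |u i ℓ - ut i ℓ| := by
  simp only [abs_sub_comm]

theorem sum_apply_le_sum_apply_add_sum_iSup_abs_sub (π : Fin n → Fin n) :
    ∑ i, u i (π i) ≤ ∑ i, ut i (π i) + ∑ i, ⨆ ℓ, |u i ℓ - ut i ℓ| := by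
  rw [← sum_add_distrib]
  refine sum_le_sum fun i _ => ?_
  have hdev : |u i (π i) - ut i (π i)| ≤ ⨆ ℓ, |u i ℓ - ut i ℓ| :=
    le_ciSup (Set.finite_range fun ℓ => |u i ℓ - ut i ℓ|).bddAbove (π i)
  linarith [le_abs_self (u i (π i) - ut i (π i))]

theorem OPT_le_OPT_add : OPT n u ≤ OPT n ut + ∑ i, ⨆ ℓ, |u i ℓ - ut i ℓ| := by
  refine csSup_le_csSup_add ⟨_, 1, rfl⟩ ?_ ?_
  · refine (Set.finite_range fun π : Equiv.Perm (Fin n) => ∑ i, ut i (π i)).bddAbove.mono ?_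
    rintro _ ⟨π, rfl⟩
    exact ⟨π, rfl⟩
  · rintro _ ⟨π, rfl⟩
    exact ⟨_, ⟨π, rfl⟩, sum_apply_le_sum_apply_add_sum_iSup_abs_sub u ut π⟩

theorem OPTplus_le_OPTplus_add (j : Fin n) :
    OPTplus n u j ≤ OPTplus n ut j + ∑ i, ⨆ ℓ, |u i ℓ - ut i ℓ| := by
  have hcard (ℓ : Fin n) : (univ.filter fun i : Fin n => i = ℓ).card = 1 := by
    simp [filter_eq']
  refine csSup_le_csSup_add ⟨_, id, fun ℓ _ => (hcard ℓ).le, (hcard j).trans_le one_le_two, rfl⟩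
    ?_ ?_
  · refine (Set.finite_range fun π : Fin n → Fin n => ∑ i, ut i (π i)).bddAbove.mono ?_
    rintro _ ⟨π, -, -, rfl⟩
    exact ⟨π, rfl⟩
  · rintro _ ⟨π, hπ, hπj, rfl⟩
    exact ⟨_, ⟨π, hπ, hπj, rfl⟩, sum_apply_le_sum_apply_add_sum_iSup_abs_sub u ut π⟩

theorem abs_OPT_sub_le : |OPT n u - OPT n ut| ≤ ∑ i, ⨆ ℓ, |u i ℓ - ut i ℓ| := by
  have := OPT_le_OPT_add ut u
  rw [sum_iSup_abs_sub_comm] at this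
  exact abs_sub_le_iff.2 ⟨by linarith [OPT_le_OPT_add u ut], by linarith⟩

theorem abs_OPTplus_sub_le (j : Fin n) :
    |OPTplus n u j - OPTplus n ut j| ≤ ∑ i, ⨆ ℓ, |u i ℓ - ut i ℓ| := by
  have := OPTplus_le_OPTplus_add ut u j
  rw [sum_iSup_abs_sub_comm] at this
  exact abs_sub_le_iff.2 ⟨by linarith [OPTplus_le_OPTplus_add u ut j], by linarith⟩

end Welfare

theorem vcg_price_continuity_general (n : ℕ)
    (u ut : Fin n → Fin n → ℝ) :
    ∀ j, |price n u j - price n ut j| ≤ 2 * ∑ i, ⨆ ℓ : Fin n, |u i ℓ - ut i ℓ| := by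
  intro j
  calc |price n u j - price n ut j|
      = |(OPTplus n u j - OPTplus n ut j) - (OPT n u - OPT n ut)| := by
        unfold price; ring_nf
    _ ≤ |OPTplus n u j - OPTplus n ut j| + |OPT n u - OPT n ut| := abs_sub _ _
    _ ≤ _ := add_le_add (abs_OPTplus_sub_le u ut j) (abs_OPT_sub_le u ut)
    _ = _ := (two_mul _).symm

/-- Continuity of VCG prices in the utilities:
`|C_j(u) − C_j(ũ)| ≤ 2 · ∑ i, max_ℓ |u i ℓ − ũ i ℓ|`. -/
theorem vcg_price_continuity (n : ℕ) (hn : 1 ≤ n)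
    (u ut : Fin n → Fin n → ℝ)
    (hu : ∀ i j, 0 ≤ u i j) (hut : ∀ i j, 0 ≤ ut i j) :
    ∀ j, |price n u j - price n ut j| ≤ 2 * ∑ i, ⨆ ℓ : Fin n, |u i ℓ - ut i ℓ| :=
  vcg_price_continuity_general n u ut
end

section
/- Let n ≥ 1, u ∈ ℝ^{n×n} with 0 ≤ u_{ij} ≤ 1, λ ∈ ℝ^n with λ_i ≥ 0, and let f₀ : (0,1] → ℝ be non-decreasing with f₀(z) ≤ 0 for all z. For M > 1 set η(λ) := (Σ_i λ_i)/M − n²·f₀(1/(n·M)). Then OPT(λ) − η(λ) ≤ OPT₀(λ) ≤ OPT(λ): the regularized optimum loses at most η(λ) of welfare relative to the unregularized assignment optimum. -/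
/-!
A positive doubly stochastic matrix has entries in `(0, 1]`, so `F₀ ≤ 0` on it, and by
Birkhoff–von Neumann its linear welfare is a convex combination of permutation welfares, each
at most `OPT`. Conversely, for an optimal permutation `π` the matrix
`x = J / (n M) + (1 - 1 / M) P_π` is positive doubly stochastic with all entries at least
`1 / (n M)`, so `F₀(x) ≥ n² f₀(1 / (n M))` by monotonicity, while its linear welfare is at least
`(1 - 1 / M) OPT ≥ OPT - (∑ λ) / M` since `OPT ≤ ∑ λ`.
-/
open Finset

/-- `x` is a positive doubly stochastic matrix. -/
def PosDoublyStochastic (n : ℕ) (x : Fin n → Fin n → ℝ) : Prop :=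
  (∀ i j, 0 < x i j) ∧ (∀ i, ∑ j, x i j = 1) ∧ (∀ j, ∑ i, x i j = 1)

/-- The optimal assignment welfare for the weighted utilities `λ_i·u_{ij}`. -/
noncomputable def OPTw (n : ℕ) (u : Fin n → Fin n → ℝ) (lam : Fin n → ℝ) : ℝ :=
  sSup {v | ∃ π : Equiv.Perm (Fin n), v = ∑ i, lam i * u i (π i)}

/-- The optimal regularized welfare: the supremum, over positive doubly
stochastic matrices `x`, of `F₀(x) + ∑_{i,j} λ_i·u_{ij}·x_{ij}` where
`F₀(x) = ∑_{i,j} f₀(x_{ij})`. -/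
noncomputable def OPT0 (n : ℕ) (u : Fin n → Fin n → ℝ) (f0 : ℝ → ℝ)
    (lam : Fin n → ℝ) : ℝ :=
  sSup {v | ∃ x : Fin n → Fin n → ℝ, PosDoublyStochastic n x ∧
    v = (∑ i, ∑ j, f0 (x i j)) + ∑ i, ∑ j, lam i * u i j * x i j}

section Birkhoff

variable {ι : Type*} [Fintype ι] [DecidableEq ι]

theorem sum_sum_mul_le_of_mem_doublyStochastic {c x : Matrix ι ι ℝ} {B : ℝ}
    (hx : x ∈ doublyStochastic ℝ ι) (hc : ∀ σ : Equiv.Perm ι, ∑ i, c i (σ i) ≤ B) :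
    ∑ i, ∑ j, c i j * x i j ≤ B := by
  have hlin : IsLinearMap ℝ fun y : Matrix ι ι ℝ => ∑ i, ∑ j, c i j * y i j := by
    constructor
    · intro y z; simp only [Matrix.add_apply, mul_add, sum_add_distrib]
    · intro r y; simp only [Matrix.smul_apply, smul_eq_mul, mul_sum, mul_left_comm]
  rw [← SetLike.mem_coe, doublyStochastic_eq_convexHull_permMatrix] at hx
  refine convexHull_min ?_ (convex_halfSpace_le hlin B) hx
  rintro _ ⟨σ, rfl⟩
  simpa [Equiv.Perm.permMatrix, PEquiv.toMatrix_apply, eq_comm] using hc σ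

end Birkhoff

section Assignment

variable {n : ℕ}

theorem PosDoublyStochastic.mem_doublyStochastic {x : Fin n → Fin n → ℝ}
    (hx : PosDoublyStochastic n x) : Matrix.of x ∈ doublyStochastic ℝ (Fin n) :=
  mem_doublyStochastic_iff_sum.2 ⟨fun i j => (hx.1 i j).le, hx.2.1, hx.2.2⟩

theorem PosDoublyStochastic.le_one {x : Fin n → Fin n → ℝ}
    (hx : PosDoublyStochastic n x) (i j : Fin n) : x i j ≤ 1 :=
  hx.2.1 i ▸ single_le_sum (fun j _ => (hx.1 i j).le) (mem_univ j)

def permMix (π : Equiv.Perm (Fin n)) (a b : ℝ) : Fin n → Fin n → ℝ :=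
  fun i j => a + if π i = j then b else 0

theorem posDoublyStochastic_permMix (π : Equiv.Perm (Fin n)) {a b : ℝ} (ha : 0 < a)
    (hb : 0 ≤ b) (hab : n * a + b = 1) : PosDoublyStochastic n (permMix π a b) := by
  refine ⟨fun i j => ?_, fun i => ?_, fun j => ?_⟩
  · unfold permMix; split_ifs <;> linarith
  · simp [permMix, sum_add_distrib, hab]
  · simp [permMix, sum_add_distrib, ← Equiv.eq_symm_apply, hab]

theorem le_permMix (π : Equiv.Perm (Fin n)) {a b : ℝ} (hb : 0 ≤ b) (i j : Fin n) :
    a ≤ permMix π a b i j := by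
  unfold permMix; split_ifs <;> linarith

variable (u : Fin n → Fin n → ℝ) (lam : Fin n → ℝ) {f0 : ℝ → ℝ}

theorem OPTw_eq_sSup_range :
    OPTw n u lam = sSup (Set.range fun π : Equiv.Perm (Fin n) => ∑ i, lam i * u i (π i)) := by
  simp only [OPTw, Set.range, eq_comm]

theorem exists_perm_eq_OPTw : ∃ π : Equiv.Perm (Fin n), OPTw n u lam = ∑ i, lam i * u i (π i) :=
  (OPTw_eq_sSup_range u lam ▸ (Set.range_nonempty _).csSup_mem (Set.finite_range _)).imp
    fun _ => Eq.symm

theorem le_OPTw (π : Equiv.Perm (Fin n)) : ∑ i, lam i * u i (π i) ≤ OPTw n u lam :=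
  OPTw_eq_sSup_range u lam ▸ le_csSup (Set.finite_range _).bddAbove ⟨π, rfl⟩


theorem OPTw_le_sum (hu : ∀ i j, u i j ≤ 1) (hlam : ∀ i, 0 ≤ lam i) :
    OPTw n u lam ≤ ∑ i, lam i := by
  obtain ⟨π, hπ⟩ := exists_perm_eq_OPTw u lam
  exact hπ ▸ sum_le_sum fun i _ => mul_le_of_le_one_right (hlam i) (hu i (π i))

theorem regularizedWelfare_le_OPTw (hf0le : ∀ z : ℝ, 0 < z → z ≤ 1 → f0 z ≤ 0)
    {x : Fin n → Fin n → ℝ} (hx : PosDoublyStochastic n x) :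
    (∑ i, ∑ j, f0 (x i j)) + ∑ i, ∑ j, lam i * u i j * x i j ≤ OPTw n u lam := by
  have hF0 : ∑ i, ∑ j, f0 (x i j) ≤ 0 :=
    sum_nonpos fun i _ => sum_nonpos fun j _ => hf0le _ (hx.1 i j) (hx.le_one i j)
  have hlin : ∑ i, ∑ j, lam i * u i j * x i j ≤ OPTw n u lam :=
    sum_sum_mul_le_of_mem_doublyStochastic (c := fun i j => lam i * u i j)
      hx.mem_doublyStochastic (le_OPTw u lam)
  linarith

theorem le_OPT0 (hf0le : ∀ z : ℝ, 0 < z → z ≤ 1 → f0 z ≤ 0)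
    {x : Fin n → Fin n → ℝ} (hx : PosDoublyStochastic n x) :
    (∑ i, ∑ j, f0 (x i j)) + ∑ i, ∑ j, lam i * u i j * x i j ≤ OPT0 n u f0 lam := by
  refine le_csSup ⟨OPTw n u lam, ?_⟩ ⟨x, hx, rfl⟩
  rintro _ ⟨y, hy, rfl⟩
  exact regularizedWelfare_le_OPTw u lam hf0le hy

theorem OPT0_le_OPTw (hn : 1 ≤ n) (hf0le : ∀ z : ℝ, 0 < z → z ≤ 1 → f0 z ≤ 0) :
    OPT0 n u f0 lam ≤ OPTw n u lam := by
  have hx : PosDoublyStochastic n (permMix 1 (1 / n) 0) :=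
    posDoublyStochastic_permMix 1 (by positivity) le_rfl (by rw [add_zero]; field_simp)
  refine csSup_le ⟨_, _, hx, rfl⟩ ?_
  rintro _ ⟨y, hy, rfl⟩
  exact regularizedWelfare_le_OPTw u lam hf0le hy

theorem card_sq_mul_le_sum_sum
    (hf0mono : ∀ z w : ℝ, 0 < z → z ≤ w → w ≤ 1 → f0 z ≤ f0 w)
    {x : Fin n → Fin n → ℝ} {a : ℝ} (ha : 0 < a) (hax : ∀ i j, a ≤ x i j)
    (hx : ∀ i j, x i j ≤ 1) :
    (n : ℝ) ^ 2 * f0 a ≤ ∑ i, ∑ j, f0 (x i j) :=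
  calc (n : ℝ) ^ 2 * f0 a = ∑ _i : Fin n, ∑ _j : Fin n, f0 a := by
        simp only [sum_const, card_univ, Fintype.card_fin, nsmul_eq_mul]; ring
    _ ≤ ∑ i, ∑ j, f0 (x i j) :=
      sum_le_sum fun i _ => sum_le_sum fun j _ => hf0mono _ _ ha (hax i j) (hx i j)

theorem mul_welfare_le_sum_permMix (hu : ∀ i j, 0 ≤ u i j) (hlam : ∀ i, 0 ≤ lam i)
    (π : Equiv.Perm (Fin n)) {a b : ℝ} (ha : 0 ≤ a) (hb : 0 ≤ b) :
    b * ∑ i, lam i * u i (π i) ≤ ∑ i, ∑ j, lam i * u i j * permMix π a b i j := by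
  rw [mul_sum]
  refine sum_le_sum fun i _ => ?_
  have hw : 0 ≤ lam i * u i (π i) := mul_nonneg (hlam i) (hu i (π i))
  calc b * (lam i * u i (π i)) ≤ lam i * u i (π i) * permMix π a b i (π i) := by
        simp only [permMix, if_true]; nlinarith
    _ ≤ ∑ j, lam i * u i j * permMix π a b i j :=
      single_le_sum (f := fun j => lam i * u i j * permMix π a b i j)
        (fun j _ => mul_nonneg (mul_nonneg (hlam i) (hu i j)) (ha.trans (le_permMix π hb i j)))
        (mem_univ _)

end Assignment

/-- Small efficiency loss due to regularization:
`OPT(λ) − η(λ) ≤ OPT₀(λ) ≤ OPT(λ)` where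
`η(λ) = (∑ i, λ_i)/M − n²·f₀(1/(n·M))`. -/
theorem regularization_small_efficiency_loss
    (n : ℕ) (hn : 1 ≤ n)
    (u : Fin n → Fin n → ℝ) (hu : ∀ i j, 0 ≤ u i j ∧ u i j ≤ 1)
    (lam : Fin n → ℝ) (hlam : ∀ i, 0 ≤ lam i)
    (f0 : ℝ → ℝ)
    (hf0le : ∀ z : ℝ, 0 < z → z ≤ 1 → f0 z ≤ 0)
    (hf0mono : ∀ z w : ℝ, 0 < z → z ≤ w → w ≤ 1 → f0 z ≤ f0 w)
    (M : ℝ) (hM : 1 < M) :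
    OPTw n u lam - ((∑ i, lam i) / M - (n : ℝ)^2 * f0 (1 / ((n : ℝ) * M)))
        ≤ OPT0 n u f0 lam ∧
      OPT0 n u f0 lam ≤ OPTw n u lam := by
  refine ⟨?_, OPT0_le_OPTw u lam hn hf0le⟩
  have hM0 : 0 < M := one_pos.trans hM
  set a := 1 / ((n : ℝ) * M)
  set b := 1 - 1 / M
  have ha : 0 < a := by positivity
  have hb : 0 ≤ b := sub_nonneg.2 ((div_le_one hM0).2 hM.le)
  have hab : n * a + b = 1 := by simp only [a, b]; field_simp; ring
  obtain ⟨π, hπ⟩ := exists_perm_eq_OPTw u lam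
  have hx := posDoublyStochastic_permMix π ha hb hab
  have hF0 := card_sq_mul_le_sum_sum hf0mono ha (le_permMix π hb) hx.le_one
  have hlin := mul_welfare_le_sum_permMix u lam (fun i j => (hu i j).1) hlam π ha.le hb
  have hOPT : OPTw n u lam / M ≤ (∑ i, lam i) / M :=
    div_le_div_of_nonneg_right (OPTw_le_sum u lam (fun i j => (hu i j).2) hlam) hM0.le
  have hbOPT : b * OPTw n u lam = OPTw n u lam - OPTw n u lam / M := by ring
  linarith [le_OPT0 u lam hf0le hx, hπ ▸ hlin]
end

section
/- Let n ≥ 1, λ̄ > 0, and 0 < β with β·n⁴ ≤ λ̄. Let u ∈ ℝ^{n×n} with 0 ≤ u_{ij} ≤ 1 and λ ∈ ℝ^n with 0 ≤ λ_i ≤ λ̄. Suppose x is a positive doubly stochastic n×n matrix maximizing Φ(x) := Σ_{i,j} λ_i·u_{ij}·x_{ij} − Σ_{i,j} β/x_{ij} over all positive doubly stochastic matrices. Then every entry of x satisfies x_{mj} > (1/3)·√(β/(n⁴·λ̄)): the inverse-barrier regularizer forces the optimal allocation to be bounded away from the boundary, with an explicit lower bound on all entries. -/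
/-!
If an entry `δ = x m j` were tiny, averaging gives `j'`, `m'` with `x m j'`, `x m' j ≥ 1 / n`, and
shifting mass `δ` around the rectangle `(m, j) → (m, j') → (m', j') → (m', j)` keeps `x` positive
doubly stochastic while doubling the tiny entry. This lowers the barrier term at `(m, j)` by
`β / (2δ)`, costs at most `2 λ̄ δ` in the linear term, and, since the two shrunken entries stay
`≥ 1 / (2n)`, raises their barrier terms by at most `2 n β` each. Optimality of `x` then forces
`β / (2δ) ≤ 2 λ̄ δ + 4 n β`, which fails for `δ ≤ (1/3) √(β / (n⁴ λ̄)) ≤ 1 / (3 n⁴)` and `n ≥ 2`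
(for `n = 1` the only entry is `1`).
-/

open Finset

theorem exists_one_le_card_mul_of_sum_eq_one {ι : Type*} [Fintype ι] [Nonempty ι]
    {f : ι → ℝ} (hf : ∑ i, f i = 1) : ∃ i, 1 ≤ Fintype.card ι * f i := by
  obtain ⟨i, -, hi⟩ := exists_le_of_sum_le (s := univ) (f := fun _ => (1 : ℝ))
    (g := fun i => Fintype.card ι * f i) univ_nonempty (by simp [← mul_sum, hf])
  exact ⟨i, hi⟩

theorem sum_sum_eq_add_of_rectangle {ι M : Type*} [Fintype ι] [AddCommMonoid M]
    {g : ι → ι → M} {m m' j j' : ι} (hm : m ≠ m') (hj : j ≠ j')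
    (hg : ∀ i k, (i ≠ m ∧ i ≠ m') ∨ (k ≠ j ∧ k ≠ j') → g i k = 0) :
    ∑ i, ∑ k, g i k = g m j + g m j' + (g m' j + g m' j') := by
  rw [Fintype.sum_eq_add m m' hm fun i hi => Finset.sum_eq_zero fun k _ => hg i k (.inl hi),
    Fintype.sum_eq_add j j' hj fun k hk => hg m k (.inr hk),
    Fintype.sum_eq_add j j' hj fun k hk => hg m' k (.inr hk)]

section RectShift

variable {ι : Type*} [DecidableEq ι]

def rectShift (x : ι → ι → ℝ) (m m' j j' : ι) (t : ℝ) : ι → ι → ℝ := fun i k =>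
  x i k + t * ((if i = m then 1 else 0) - (if i = m' then 1 else 0)) *
    ((if k = j then 1 else 0) - (if k = j' then 1 else 0))

variable (x : ι → ι → ℝ) (m m' j j' : ι) (t : ℝ)

theorem sum_rectShift_right [Fintype ι] (i : ι) :
    ∑ k, rectShift x m m' j j' t i k = ∑ k, x i k := by
  simp [rectShift, sum_add_distrib, ← mul_sum, sum_sub_distrib]

theorem sum_rectShift_left [Fintype ι] (k : ι) :
    ∑ i, rectShift x m m' j j' t i k = ∑ i, x i k := by
  simp [rectShift, sum_add_distrib, ← sum_mul, ← mul_sum, sum_sub_distrib]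

theorem rectShift_of_not_mem {i k : ι} (h : (i ≠ m ∧ i ≠ m') ∨ (k ≠ j ∧ k ≠ j')) :
    rectShift x m m' j j' t i k = x i k := by
  rcases h with ⟨h₁, h₂⟩ | ⟨h₁, h₂⟩ <;> simp [rectShift, h₁, h₂]

variable {m m' j j'}

theorem rectShift_apply_left_left (hm : m ≠ m') (hj : j ≠ j') :
    rectShift x m m' j j' t m j = x m j + t := by
  simp [rectShift, hm, hj]

theorem rectShift_apply_left_right (hm : m ≠ m') (hj : j ≠ j') :
    rectShift x m m' j j' t m j' = x m j' - t := by
  simp [rectShift, hm, hj.symm]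
  ring

theorem rectShift_apply_right_left (hm : m ≠ m') (hj : j ≠ j') :
    rectShift x m m' j j' t m' j = x m' j - t := by
  simp [rectShift, hm.symm, hj]
  ring

theorem rectShift_apply_right_right (hm : m ≠ m') (hj : j ≠ j') :
    rectShift x m m' j j' t m' j' = x m' j' + t := by
  simp [rectShift, hm.symm, hj.symm]

theorem sum_sum_sub_rectShift [Fintype ι] (hm : m ≠ m') (hj : j ≠ j') (φ : ι → ι → ℝ → ℝ) :
    ∑ i, ∑ k, φ i k (rectShift x m m' j j' t i k) - ∑ i, ∑ k, φ i k (x i k) =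
      (φ m j (x m j + t) - φ m j (x m j)) + (φ m j' (x m j' - t) - φ m j' (x m j')) +
        ((φ m' j (x m' j - t) - φ m' j (x m' j)) +
          (φ m' j' (x m' j' + t) - φ m' j' (x m' j'))) := by
  simp only [← sum_sub_distrib]
  rw [sum_sum_eq_add_of_rectangle hm hj fun i k h => by
      rw [rectShift_of_not_mem x m m' j j' t h, sub_self],
    rectShift_apply_left_left x t hm hj, rectShift_apply_left_right x t hm hj,
    rectShift_apply_right_left x t hm hj, rectShift_apply_right_right x t hm hj]

end RectShift

namespace PosDoublyStochastic

variable {n : ℕ} {x : Fin n → Fin n → ℝ}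

theorem rectShift (hx : PosDoublyStochastic n x) {m m' j j' : Fin n} (hm : m ≠ m')
    (hj : j ≠ j') {t : ℝ} (ht : 0 ≤ t) (ht₁ : t < x m j') (ht₂ : t < x m' j) :
    PosDoublyStochastic n (rectShift x m m' j j' t) := by
  obtain ⟨hpos, hrow, hcol⟩ := hx
  refine ⟨fun i k => ?_, fun i => by rw [sum_rectShift_right, hrow],
    fun k => by rw [sum_rectShift_left, hcol]⟩
  by_cases h : (i ≠ m ∧ i ≠ m') ∨ (k ≠ j ∧ k ≠ j')
  · rw [rectShift_of_not_mem x m m' j j' t h]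
    exact hpos i k
  · have := hpos m j
    have := hpos m' j'
    rcases (by tauto : (i = m ∨ i = m') ∧ (k = j ∨ k = j')) with ⟨rfl | rfl, rfl | rfl⟩
    · rw [rectShift_apply_left_left x t hm hj]; linarith
    · rw [rectShift_apply_left_right x t hm hj]; linarith
    · rw [rectShift_apply_right_left x t hm hj]; linarith
    · rw [rectShift_apply_right_right x t hm hj]; linarith

theorem two_le_of_lt_one (hx : PosDoublyStochastic n x) {m j : Fin n} (h : x m j < 1) :
    2 ≤ n := by
  by_contra! hn
  have : Subsingleton (Fin n) := Fin.subsingleton_iff_le_one.mpr (by omega)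
  rw [← hx.2.1 m, Fintype.sum_subsingleton _ j] at h
  exact h.false

end PosDoublyStochastic

noncomputable def barrierUtility (c β z : ℝ) : ℝ := c * z - β / z

section BarrierUtility

variable {c β : ℝ}

theorem barrierUtility_monotoneOn (hc : 0 ≤ c) (hβ : 0 ≤ β) :
    MonotoneOn (barrierUtility c β) (Set.Ioi 0) := fun a ha b _ hab => by
  have : β / b ≤ β / a := div_le_div_of_nonneg_left hβ ha hab
  unfold barrierUtility
  nlinarith

theorem div_two_mul_le_barrierUtility_add_self_sub (hc : 0 ≤ c) {δ : ℝ} (hδ : 0 < δ) :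
    β / (2 * δ) ≤ barrierUtility c β (δ + δ) - barrierUtility c β δ := by
  have : β / δ - β / (δ + δ) = β / (2 * δ) := by field_simp; ring
  unfold barrierUtility
  nlinarith [mul_nonneg hc hδ.le]

theorem neg_le_barrierUtility_sub_sub {L a δ k : ℝ} (hcL : c ≤ L) (hβ : 0 ≤ β) (hδ : 0 ≤ δ)
    (hpos : 0 < a - δ) (hk : 1 ≤ k * (a - δ)) :
    -(L * δ + k * β) ≤ barrierUtility c β (a - δ) - barrierUtility c β a := by
  have h₁ : β / (a - δ) ≤ k * β := by
    rw [div_le_iff₀ hpos]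
    nlinarith
  have h₂ : 0 ≤ β / a := div_nonneg hβ (by linarith)
  unfold barrierUtility
  nlinarith

end BarrierUtility

theorem sum_sum_barrierUtility {n : ℕ} (lam : Fin n → ℝ) (u x : Fin n → Fin n → ℝ) (β : ℝ) :
    ∑ i, ∑ k, barrierUtility (lam i * u i k) β (x i k) =
      (∑ i, ∑ k, lam i * u i k * x i k) - ∑ i, ∑ k, β / x i k := by
  simp only [barrierUtility, sum_sub_distrib]

theorem PosDoublyStochastic.barrier_gain_le_of_isMax {n : ℕ} {lbar β : ℝ} (hβ : 0 ≤ β)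
    {u : Fin n → Fin n → ℝ} (hu : ∀ i j, 0 ≤ u i j ∧ u i j ≤ 1)
    {lam : Fin n → ℝ} (hlam : ∀ i, 0 ≤ lam i ∧ lam i ≤ lbar)
    {x : Fin n → Fin n → ℝ} (hx : PosDoublyStochastic n x)
    (hmax : ∀ x' : Fin n → Fin n → ℝ, PosDoublyStochastic n x' →
      (∑ i, ∑ j, lam i * u i j * x' i j) - (∑ i, ∑ j, β / x' i j) ≤
        (∑ i, ∑ j, lam i * u i j * x i j) - (∑ i, ∑ j, β / x i j))
    {m j : Fin n} (hsmall : 2 * n * x m j ≤ 1) :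
    β / (2 * x m j) ≤ 2 * lbar * x m j + 4 * n * β := by
  have : Nonempty (Fin n) := ⟨m⟩
  obtain ⟨j', hj'⟩ := exists_one_le_card_mul_of_sum_eq_one (hx.2.1 m)
  obtain ⟨m', hm'⟩ := exists_one_le_card_mul_of_sum_eq_one (hx.2.2 j)
  rw [Fintype.card_fin] at hj' hm'
  set δ := x m j
  have hδ : 0 < δ := hx.1 m j
  have hj : j ≠ j' := by rintro rfl; linarith
  have hm : m ≠ m' := by rintro rfl; linarith
  have hc i k : 0 ≤ lam i * u i k := mul_nonneg (hlam i).1 (hu i k).1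
  have hcL i k : lam i * u i k ≤ lbar :=
    (mul_le_of_le_one_right (hlam i).1 (hu i k).2).trans (hlam i).2
  have hopt := hmax _ (hx.rectShift hm hj hδ.le (by nlinarith) (by nlinarith))
  have hΔ := sum_sum_sub_rectShift x δ hm hj fun i k => barrierUtility (lam i * u i k) β
  simp only [sum_sum_barrierUtility] at hΔ
  have hmj := div_two_mul_le_barrierUtility_add_self_sub (β := β) (hc m j) hδ
  have hmj' := neg_le_barrierUtility_sub_sub (hcL m j') hβ hδ.le (by nlinarith)
    (by linarith : 1 ≤ 2 * n * (x m j' - δ))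
  have hm'j := neg_le_barrierUtility_sub_sub (hcL m' j) hβ hδ.le (by nlinarith)
    (by linarith : 1 ≤ 2 * n * (x m' j - δ))
  have hm'j' := sub_nonneg.mpr <| barrierUtility_monotoneOn (hc m' j') hβ (hx.1 m' j')
    (add_pos (hx.1 m' j') hδ) (le_add_of_nonneg_right hδ.le)
  linarith

theorem loss_lt_barrier_gain {n L β δ : ℝ} (hn : 2 ≤ n) (hβ : 0 < β) (hδ : 0 < δ)
    (hL : 9 * n ^ 4 * L * δ ^ 2 ≤ β) (hδn : 3 * n ^ 4 * δ ≤ 1) :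
    2 * L * δ + 4 * n * β < β / (2 * δ) := by
  rw [lt_div_iff₀ (by positivity)]
  have hn4 : 8 * n ≤ n ^ 4 := by nlinarith [pow_le_pow_left₀ (by norm_num) hn 3]
  nlinarith [mul_le_mul_of_nonneg_left hδn (by positivity : (0 : ℝ) ≤ n * β),
    mul_le_mul_of_nonneg_left hn4 hβ.le]

theorem barrier_regularizer_entry_lower_bound_general
    (n : ℕ)
    (lbar β : ℝ) (hβ : 0 < β)
    (hβn : β * (n : ℝ) ^ 4 ≤ lbar)
    (u : Fin n → Fin n → ℝ) (hu : ∀ i j, 0 ≤ u i j ∧ u i j ≤ 1)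
    (lam : Fin n → ℝ) (hlam : ∀ i, 0 ≤ lam i ∧ lam i ≤ lbar)
    (x : Fin n → Fin n → ℝ) (hx : PosDoublyStochastic n x)
    (hmax : ∀ x' : Fin n → Fin n → ℝ, PosDoublyStochastic n x' →
      (∑ i, ∑ j, lam i * u i j * x' i j) - (∑ i, ∑ j, β / x' i j) ≤
        (∑ i, ∑ j, lam i * u i j * x i j) - (∑ i, ∑ j, β / x i j)) :
    ∀ m j, x m j > (1 / 3) * Real.sqrt (β / ((n : ℝ) ^ 4 * lbar)) := by
  intro m j
  by_contra! hsmall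
  set δ := x m j
  have hδ : 0 < δ := hx.1 m j
  have hn : (1 : ℝ) ≤ n := by exact_mod_cast m.pos
  have hn4 : (n : ℝ) ≤ n ^ 4 := le_self_pow₀ hn (by norm_num)
  have hlbar : 0 < lbar := lt_of_lt_of_le (by positivity) hβn
  have hL : 9 * n ^ 4 * lbar * δ ^ 2 ≤ β := by
    have := (Real.le_sqrt (by positivity) (by positivity)).mp
      (by linarith : 3 * δ ≤ √(β / (n ^ 4 * lbar)))
    rw [le_div_iff₀ (by positivity)] at this
    linarith
  have hδn : 3 * n ^ 4 * δ ≤ 1 := by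
    have : lbar * (3 * n ^ 4 * δ) ^ 2 ≤ lbar * 1 := by
      nlinarith [mul_le_mul_of_nonneg_right hL (by positivity : (0 : ℝ) ≤ n ^ 4)]
    exact (pow_le_one_iff_of_nonneg (by positivity) two_ne_zero).mp
      (le_of_mul_le_mul_left this hlbar)
  have hn2 : (2 : ℝ) ≤ n := by
    exact_mod_cast hx.two_le_of_lt_one (m := m) (j := j) (by nlinarith)
  exact (loss_lt_barrier_gain hn2 hβ hδ hL hδn).not_ge
    (hx.barrier_gain_le_of_isMax hβ.le hu hlam hmax (by nlinarith))

/-- The inverse-barrier regularizer forces the optimal allocation to be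
bounded away from the boundary: if `x` maximizes
`Φ(x) = ∑ λ_i·u_{ij}·x_{ij} − ∑ β/x_{ij}` over positive doubly stochastic
matrices, with `0 ≤ λ_i ≤ λ̄` and `β·n⁴ ≤ λ̄`, then every entry satisfies
`x_{mj} > (1/3)·√(β/(n⁴·λ̄))`. -/
theorem barrier_regularizer_entry_lower_bound
    (n : ℕ) (hn : 1 ≤ n)
    (lbar β : ℝ) (hlbar : 0 < lbar) (hβ : 0 < β)
    (hβn : β * (n : ℝ) ^ 4 ≤ lbar)
    (u : Fin n → Fin n → ℝ) (hu : ∀ i j, 0 ≤ u i j ∧ u i j ≤ 1)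
    (lam : Fin n → ℝ) (hlam : ∀ i, 0 ≤ lam i ∧ lam i ≤ lbar)
    (x : Fin n → Fin n → ℝ) (hx : PosDoublyStochastic n x)
    (hmax : ∀ x' : Fin n → Fin n → ℝ, PosDoublyStochastic n x' →
      (∑ i, ∑ j, lam i * u i j * x' i j) - (∑ i, ∑ j, β / x' i j) ≤
        (∑ i, ∑ j, lam i * u i j * x i j) - (∑ i, ∑ j, β / x i j)) :
    ∀ m j, x m j > (1 / 3) * Real.sqrt (β / ((n : ℝ) ^ 4 * lbar)) :=
  barrier_regularizer_entry_lower_bound_general n lbar β hβ hβn u hu lam hlam x hx hmax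
end

section
/- Let u be the 4×4 utility matrix with rows u₁ = u₂ = (11, 9, 14, 0) and u₃ = u₄ = (0, 0, 10, 0) (items labeled A, B, C, D). There is no finitely supported probability distribution — given by weights w_s ≥ 0 with Σ_s w_s = 1 over finitely many pairs (λ^s, π^s), where λ^s ∈ ℝ⁴ has nonnegative entries and π^s is a permutation of {1,2,3,4} attaining OPT(u'^s) for u'^s_{ij} := λ^s_i·u_{ij} and satisfying π^s({1,2}) = {A,B} and π^s({3,4}) = {C,D} — such that for every player i the expected VCG payment Σ_s w_s·p_i(u'^s, π^s) equals 1. Hence the Hylland–Zeckhauser equilibrium allocating items A, B half-half to players 1, 2 and items C, D half-half to players 3, 4 with each player spending exactly one token is not realizable as an average of VCG runs on rescaled utilities: not all HZ equilibria are supported by VCG prices. -/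
open Finset

/-- The 4×4 example utility matrix: rows `(11, 9, 14, 0)` for players 1, 2
and `(0, 0, 10, 0)` for players 3, 4 (items `A = 0`, `B = 1`, `C = 2`, `D = 3`). -/
noncomputable def uEx : Fin 4 → Fin 4 → ℝ :=
  ![![11, 9, 14, 0], ![11, 9, 14, 0], ![0, 0, 10, 0], ![0, 0, 10, 0]]

/-!
Permuting players inside the blocks `{0, 1}` and `{2, 3}` leaves `uEx` unchanged, so it suffices to
treat a run with `π = id` (player 0 gets A, player 2 gets C). Optimality of `id` for `λ · uEx`
forces `λ₁ ≤ λ₀`, `λ₃ ≤ λ₂` and `3λ₀ + 2λ₁ ≤ 10λ₂`. A dual solution pricing only item C bounds the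
payments of players 0 and 1 by `2λ₁` and `0`, while letting player 0 take C instead shows that
player 2 pays at least `3λ₀ + 2λ₁ ≥ 5λ₁`. Hence `p₂ + p₃ ≥ 5/2 (p₀ + p₁)` in every run, and averaging
contradicts all four expected payments being `1`.
-/

section

variable {n : ℕ}

lemma le_OPT (u : Fin n → Fin n → ℝ) (ρ : Equiv.Perm (Fin n)) :
    ∑ i, u i (ρ i) ≤ OPT n u := by
  refine le_csSup (Set.Finite.bddAbove ?_) ⟨ρ, rfl⟩
  refine (Set.finite_range fun π : Equiv.Perm (Fin n) => ∑ i, u i (π i)).subset ?_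
  rintro _ ⟨π, rfl⟩
  exact ⟨π, rfl⟩

lemma le_payment (u : Fin n → Fin n → ℝ) (π : Equiv.Perm (Fin n)) (i : Fin n)
    (σ : Fin n → Fin n) (hσ : ∀ k l : Fin n, k ≠ i → l ≠ i → σ k = σ l → k = l) :
    ∑ k ∈ univ.erase i, u k (σ k) - ∑ k ∈ univ.erase i, u k (π k) ≤ payment n u π i := by
  unfold payment
  gcongr
  refine le_csSup (Set.Finite.bddAbove ?_) ⟨σ, hσ, rfl⟩
  refine (Set.finite_range fun σ : Fin n → Fin n => ∑ k ∈ univ.erase i, u k (σ k)).subset ?_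
  rintro _ ⟨σ, -, rfl⟩
  exact ⟨σ, rfl⟩

lemma payment_nonneg (u : Fin n → Fin n → ℝ) (π : Equiv.Perm (Fin n)) (i : Fin n) :
    0 ≤ payment n u π i := by
  simpa using le_payment u π i π fun _ _ _ _ h => π.injective h

/-- Weak duality for the assignment problem without player `i`. -/
lemma payment_le_of_dual (u : Fin n → Fin n → ℝ) (π : Equiv.Perm (Fin n)) (i : Fin n)
    (v q : Fin n → ℝ) (hq : ∀ j, 0 ≤ q j) (hvq : ∀ k j, u k j ≤ v k + q j) :
    payment n u π i ≤ ∑ k ∈ univ.erase i, v k + ∑ j, q j - ∑ k ∈ univ.erase i, u k (π k) := by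
  unfold payment
  gcongr
  refine csSup_le ⟨_, π, fun _ _ _ _ h => π.injective h, rfl⟩ ?_
  rintro _ ⟨σ, hσ, rfl⟩
  have hinj : Set.InjOn σ (univ.erase i : Finset (Fin n)) := fun k hk l hl =>
    hσ k l (ne_of_mem_erase hk) (ne_of_mem_erase hl)
  calc ∑ k ∈ univ.erase i, u k (σ k)
      ≤ ∑ k ∈ univ.erase i, (v k + q (σ k)) := sum_le_sum fun k _ => hvq k (σ k)
    _ = ∑ k ∈ univ.erase i, v k + ∑ j ∈ (univ.erase i).image σ, q j := by
      rw [sum_add_distrib, sum_image hinj]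
    _ ≤ ∑ k ∈ univ.erase i, v k + ∑ j, q j :=
      add_le_add_right (sum_le_univ_sum_of_nonneg hq) _

lemma sum_erase_comp_perm {α M : Type*} [Fintype α] [DecidableEq α] [AddCommGroup M]
    (f : α → M) (τ : Equiv.Perm α) (i : α) :
    ∑ k ∈ univ.erase i, f (τ k) = ∑ k ∈ univ.erase (τ i), f k := by
  rw [sum_erase_eq_sub (mem_univ _), sum_erase_eq_sub (mem_univ _), Equiv.sum_comp]

lemma OPT_comp_perm (u : Fin n → Fin n → ℝ) (τ : Equiv.Perm (Fin n)) :
    OPT n (fun k => u (τ k)) = OPT n u := by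
  unfold OPT
  congr 1
  ext v
  constructor
  · rintro ⟨ρ, rfl⟩
    refine ⟨τ.symm.trans ρ, ?_⟩
    simpa using Equiv.sum_comp τ fun k => u k (ρ (τ.symm k))
  · rintro ⟨ρ, rfl⟩
    exact ⟨τ.trans ρ, (Equiv.sum_comp τ fun k => u k (ρ k)).symm⟩

lemma payment_comp_perm (u : Fin n → Fin n → ℝ) (π τ : Equiv.Perm (Fin n)) (i : Fin n) :
    payment n (fun k => u (τ k)) (τ.trans π) i = payment n u π (τ i) := by
  unfold payment
  rw [← sum_erase_comp_perm (fun k => u k (π k))]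
  congr 2
  ext v
  constructor
  · rintro ⟨σ, hσ, rfl⟩
    refine ⟨σ ∘ τ.symm, fun k l hk hl h => τ.symm.injective (hσ _ _ ?_ ?_ h), ?_⟩
    · rwa [ne_eq, τ.symm_apply_eq]
    · rwa [ne_eq, τ.symm_apply_eq]
    · simpa using sum_erase_comp_perm (fun k => u k (σ (τ.symm k))) τ i
  · rintro ⟨σ, hσ, rfl⟩
    exact ⟨σ ∘ τ, fun k l hk hl h => τ.injective (hσ _ _ (τ.injective.ne hk)
      (τ.injective.ne hl) h), (sum_erase_comp_perm (fun k => u k (σ k)) τ i).symm⟩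

end

lemma payment_block_ineq_of_refl (lam : Fin 4 → ℝ) (hl : ∀ i, 0 ≤ lam i)
    (hopt : ∑ i, lam i * uEx i i = OPT 4 (fun i j => lam i * uEx i j)) :
    5 / 2 * (payment 4 (fun k j => lam k * uEx k j) (Equiv.refl _) 0 +
        payment 4 (fun k j => lam k * uEx k j) (Equiv.refl _) 1) ≤
      payment 4 (fun k j => lam k * uEx k j) (Equiv.refl _) 2 +
        payment 4 (fun k j => lam k * uEx k j) (Equiv.refl _) 3 := by
  set u : Fin 4 → Fin 4 → ℝ := fun k j => lam k * uEx k j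
  have hwelfare (ρ : Equiv.Perm (Fin 4)) : ∑ i, u i (ρ i) ≤ ∑ i, u i i := hopt ▸ le_OPT u ρ
  have hAB : lam 1 ≤ lam 0 := by
    have := hwelfare (Equiv.swap 0 1)
    simp [Fin.sum_univ_four, u, uEx, Equiv.swap_apply_def] at this
    linarith
  have hCD : lam 3 ≤ lam 2 := by
    have := hwelfare (Equiv.swap 2 3)
    simp [Fin.sum_univ_four, u, uEx, Equiv.swap_apply_def] at this
    linarith
  -- player 0 takes C, player 1 takes A, player 2 takes B
  set ρ : Equiv.Perm (Fin 4) := Equiv.swap 0 1 * Equiv.swap 0 2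
  have hC : 3 * lam 0 + 2 * lam 1 ≤ 10 * lam 2 := by
    have := hwelfare ρ
    simp [Fin.sum_univ_four, u, uEx, ρ, Equiv.swap_apply_def] at this
    linarith
  have hq (j : Fin 4) : 0 ≤ ![0, 0, 10 * lam 2, 0] j := by
    fin_cases j <;> simp [hl 2]
  have hdual (k j : Fin 4) :
      u k j ≤ ![11 * lam 0, 11 * lam 1, 0, 0] k + ![0, 0, 10 * lam 2, 0] j := by
    have := hl 0; have := hl 1
    fin_cases k <;> fin_cases j <;> simp [u, uEx] <;> linarith
  have h0 : payment 4 u (Equiv.refl _) 0 ≤ 2 * lam 1 := by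
    refine (payment_le_of_dual u _ 0 _ _ hq hdual).trans_eq ?_
    simp [sum_erase_eq_sub, Fin.sum_univ_four, u, uEx]
    ring
  have h1 : payment 4 u (Equiv.refl _) 1 ≤ 0 := by
    refine (payment_le_of_dual u _ 1 _ _ hq hdual).trans_eq ?_
    simp [sum_erase_eq_sub, Fin.sum_univ_four, u, uEx]
    ring
  have h2 : 3 * lam 0 + 2 * lam 1 ≤ payment 4 u (Equiv.refl _) 2 := by
    refine le_trans (le_of_eq ?_) (le_payment u _ 2 ρ fun _ _ _ _ h => ρ.injective h)
    simp [sum_erase_eq_sub, Fin.sum_univ_four, u, uEx, ρ, Equiv.swap_apply_def]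
    ring
  have h3 := payment_nonneg u (Equiv.refl _) 3
  linarith

lemma Equiv.symm_apply_of_pair_eq {α β : Type*} {π : α ≃ β} {a b : α} {x y : β}
    (hxy : x ≠ y) (h : ({π a, π b} : Set β) = {x, y}) :
    π.symm x = a ∧ π.symm y = b ∨ π.symm x = b ∧ π.symm y = a := by
  have hx : x ∈ ({π a, π b} : Set β) := h ▸ Set.mem_insert x {y}
  have hy : y ∈ ({π a, π b} : Set β) := h ▸ Set.mem_insert_of_mem x rfl
  simp only [Set.mem_insert_iff, Set.mem_singleton_iff] at hx hy
  rcases hx with rfl | rfl <;> rcases hy with rfl | rfl <;> simp_all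

lemma payment_block_ineq (lam : Fin 4 → ℝ) (π : Equiv.Perm (Fin 4)) (hl : ∀ i, 0 ≤ lam i)
    (hopt : ∑ i, lam i * uEx i (π i) = OPT 4 (fun i j => lam i * uEx i j))
    (h01 : ({π 0, π 1} : Set (Fin 4)) = {0, 1}) (h23 : ({π 2, π 3} : Set (Fin 4)) = {2, 3}) :
    5 / 2 * (payment 4 (fun k j => lam k * uEx k j) π 0 +
        payment 4 (fun k j => lam k * uEx k j) π 1) ≤
      payment 4 (fun k j => lam k * uEx k j) π 2 + payment 4 (fun k j => lam k * uEx k j) π 3 := by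
  have hAB := Equiv.symm_apply_of_pair_eq (by decide) h01
  have hCD := Equiv.symm_apply_of_pair_eq (by decide) h23
  have hrow (k : Fin 4) : uEx (π.symm k) = uEx k := by
    rcases hAB with ⟨h0, h1⟩ | ⟨h0, h1⟩ <;> rcases hCD with ⟨h2, h3⟩ | ⟨h2, h3⟩ <;>
      fin_cases k <;> simp [h0, h1, h2, h3, uEx]
  set μ : Fin 4 → ℝ := fun k => lam (π.symm k)
  have hu : (fun k j => μ k * uEx k j) = fun k => (fun k j => lam k * uEx k j) (π.symm k) := by
    funext k j
    simp [μ, hrow]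
  have hpay (i : Fin 4) : payment 4 (fun k j => μ k * uEx k j) (Equiv.refl _) i =
      payment 4 (fun k j => lam k * uEx k j) π (π.symm i) := by
    rw [hu, ← payment_comp_perm, Equiv.symm_trans_self]
  have hopt' : ∑ i, μ i * uEx i i = OPT 4 (fun k j => μ k * uEx k j) := by
    rw [hu, OPT_comp_perm (fun k j => lam k * uEx k j) π.symm, ← hopt]
    conv_rhs => rw [← Equiv.sum_comp π.symm]
    simp [μ, hrow]
  have key := payment_block_ineq_of_refl μ (fun i => hl _) hopt'
  simp only [hpay] at key
  rcases hAB with ⟨h0, h1⟩ | ⟨h0, h1⟩ <;> rcases hCD with ⟨h2, h3⟩ | ⟨h2, h3⟩ <;>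
    rw [h0, h1, h2, h3] at key <;> linarith

/-- There is no finitely supported distribution over pairs of nonnegative
rescalings `λˢ` and optimal assignments `πˢ` (matching players 1, 2 to items
A, B and players 3, 4 to items C, D) under which every player's expected VCG
payment equals 1.  Hence the corresponding Hylland–Zeckhauser equilibrium is
not realizable as an average of VCG runs on rescaled utilities. -/
theorem hz_equilibrium_not_from_vcg :
    ¬ ∃ (S : ℕ) (w : Fin S → ℝ) (lam : Fin S → Fin 4 → ℝ)
        (π : Fin S → Equiv.Perm (Fin 4)),
      (∀ s, 0 ≤ w s) ∧ (∑ s, w s = 1) ∧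
      (∀ s i, 0 ≤ lam s i) ∧
      (∀ s, (∑ i, lam s i * uEx i (π s i)) =
        OPT 4 (fun i j => lam s i * uEx i j)) ∧
      (∀ s, ({π s 0, π s 1} : Set (Fin 4)) = {0, 1}) ∧
      (∀ s, ({π s 2, π s 3} : Set (Fin 4)) = {2, 3}) ∧
      (∀ i : Fin 4,
        (∑ s, w s * payment 4 (fun k j => lam s k * uEx k j) (π s) i) = 1) := by
  rintro ⟨S, w, lam, π, hw, -, hlam, hopt, h01, h23, hpay⟩
  set p := fun s => payment 4 (fun k j => lam s k * uEx k j) (π s)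
  have hsum : 0 ≤ ∑ s, w s * (p s 2 + p s 3 - 5 / 2 * (p s 0 + p s 1)) :=
    sum_nonneg fun s _ => mul_nonneg (hw s) <| sub_nonneg.2 <|
      payment_block_ineq (lam s) (π s) (hlam s) (hopt s) (h01 s) (h23 s)
  simp only [mul_sub, mul_add, mul_left_comm _ (5 / 2 : ℝ), sum_sub_distrib, sum_add_distrib,
    ← mul_sum, p, hpay] at hsum
  norm_num at hsum
end
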